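/- Let λ̄₁ ∈ ℝ^V and λ̄₂ ∈ ℝ^U with V ≤ U, and let λ̃₁ = (λ̄₁; 0_{U−V}) ∈ ℝ^U be λ̄₁ padded with zeros. For any U×U permutation matrix P, d_w(λ̄₁, λ̄₂) ≤ √((U−V)/(V·U))·‖λ̄₁‖₂ + (1/√U)·‖λ̃₁ − P λ̄₂‖₂. -/

import Mathlib

open Finset

/-- The set of coupling matrices between uniform distributions on `α` and `β`. -/
def couplings (α β : Type) [Fintype α] [Fintype β] : Set (α → β → ℝ) :=
  {T | (∀ m n, 0 ≤ T m n) ∧ (∀ m, ∑ n, T m n = 1 / (Fintype.card α : ℝ)) ∧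
       (∀ n, ∑ m, T m n = 1 / (Fintype.card β : ℝ))}

/-- Discrete Wasserstein-2 distance, given the matrix of squared ground costs `c`. -/
noncomputable def dW {α β : Type} [Fintype α] [Fintype β] (c : α → β → ℝ) : ℝ :=
  sInf ((fun T => Real.sqrt (∑ m, ∑ n, T m n * c m n)) '' couplings α β)

/-- Discrete Gromov-Wasserstein distance between two "distance matrices". -/
noncomputable def dGW {α β : Type} [Fintype α] [Fintype β]
    (A : α → α → ℝ) (B : β → β → ℝ) : ℝ :=
  sInf ((fun T => Real.sqrt (∑ m, ∑ m', ∑ n, ∑ n',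
    T m n * T m' n' * (A m m' - B n n')^2)) '' couplings α β)

/-- Spectral norm (largest singular value) of a real square matrix. -/
noncomputable def sn {n : ℕ} (A : Matrix (Fin n) (Fin n) ℝ) : ℝ :=
  ‖Matrix.toEuclideanCLM (𝕜 := ℝ) A‖

/-- Frobenius norm. -/
noncomputable def frob {m n : ℕ} (A : Matrix (Fin m) (Fin n) ℝ) : ℝ :=
  Real.sqrt (∑ i, ∑ j, (A i j)^2)

/-- Euclidean norm of a vector. -/
noncomputable def enorm' {n : ℕ} (v : Fin n → ℝ) : ℝ :=
  Real.sqrt (∑ i, (v i)^2)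

/-! The zero-padding coupling between `λ̄₁` and `λ̃₁` (each point `a` keeps mass `1/U` on its
copy `ι a` and spreads the remaining `(U - V)/(VU)` evenly over the padded zeros), composed
with the permutation `σ`, is a coupling of `λ̄₁` and `λ̄₂`. Minkowski's inequality in the
`L²` space of this coupling splits its cost, through the intermediate point `λ̃₁ (σ b)`, into
the exact padding cost `√((U - V)/(VU)) ‖λ̄₁‖` and the permutation cost
`(1/√U) ‖λ̃₁ - P λ̄₂‖`. -/

section Couplings

variable {α β : Type} [Fintype α] [Fintype β]

theorem dW_le_of_mem_couplings {c : α → β → ℝ} {T : α → β → ℝ}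
    (hT : T ∈ couplings α β) : dW c ≤ √(∑ a, ∑ b, T a b * c a b) :=
  csInf_le ⟨0, by rintro _ ⟨_, -, rfl⟩; positivity⟩ ⟨T, hT, rfl⟩

theorem comp_equiv_mem_couplings {β' : Type} [Fintype β'] {T : α → β → ℝ}
    (hT : T ∈ couplings α β) (e : β' ≃ β) :
    (fun a b => T a (e b)) ∈ couplings α β' := by
  obtain ⟨hpos, hrow, hcol⟩ := hT
  refine ⟨fun a b => hpos a (e b), fun a => ?_, fun b => ?_⟩
  · rw [e.sum_comp (T a), hrow]
  · rw [hcol, Fintype.card_congr e]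

theorem sum_sum_mul_of_mem_couplings {T : α → β → ℝ} (hT : T ∈ couplings α β) (g : β → ℝ) :
    ∑ a, ∑ b, T a b * g b = 1 / Fintype.card β * ∑ b, g b := by
  rw [Finset.sum_comm, Finset.mul_sum]
  exact Finset.sum_congr rfl fun b _ => by rw [← Finset.sum_mul, hT.2.2 b]

end Couplings

theorem sqrt_sum_mul_add_sq_le {ι : Type} [Fintype ι] {w : ι → ℝ} (hw : ∀ i, 0 ≤ w i)
    (f g : ι → ℝ) :
    √(∑ i, w i * (f i + g i) ^ 2) ≤ √(∑ i, w i * f i ^ 2) + √(∑ i, w i * g i ^ 2) := by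
  have hnorm : ∀ h : ι → ℝ,
      √(∑ i, w i * h i ^ 2) = ‖(WithLp.toLp 2 (fun i => √(w i) * h i) : EuclideanSpace ℝ ι)‖ := by
    intro h
    simp [EuclideanSpace.norm_eq, mul_pow, Real.sq_sqrt (hw _)]
  simp only [hnorm, mul_add]
  exact norm_add_le (WithLp.toLp 2 fun i => √(w i) * f i : EuclideanSpace ℝ ι)
    (WithLp.toLp 2 fun i => √(w i) * g i)

theorem mulVec_eq_comp_symm_of_perm {m n R : Type} [Fintype m] [DecidableEq m] [DecidableEq n]
    [NonAssocSemiring R] (σ : m ≃ n) {P : Matrix n m R}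
    (hP : ∀ v u, P v u = if σ u = v then 1 else 0) (x : m → R) :
    P.mulVec x = x ∘ σ.symm := by
  rw [← PEquiv.toMatrix_toPEquiv_mulVec]
  congr 1
  ext v u
  simp only [hP, PEquiv.toMatrix_apply, Equiv.toPEquiv_apply, Option.mem_def, Option.some.injEq,
    Equiv.symm_apply_eq, @eq_comm _ v]

section Padding

variable {α β : Type} [Fintype α] [Fintype β] [DecidableEq β]

noncomputable def paddingCoupling (ι : α ↪ β) (a : α) (b : β) : ℝ :=
  (if b = ι a then 1 / (Fintype.card β : ℝ) else 0) +
    if b ∈ Finset.univ.map ι then 0 else 1 / ((Fintype.card α : ℝ) * Fintype.card β)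

omit [Fintype α] in
theorem sum_ite_mem_map (s : Finset α) (ι : α ↪ β) (c : ℝ) :
    ∑ b, (if b ∈ s.map ι then 0 else c) = ((Fintype.card β : ℝ) - s.card) * c := by
  rw [Finset.sum_ite, Finset.sum_const_zero, zero_add, Finset.sum_const, nsmul_eq_mul,
    Finset.filter_not, Finset.filter_mem_eq_inter, Finset.univ_inter, Finset.card_univ_sdiff,
    Finset.card_map, Nat.cast_sub ((s.card_map ι).symm.trans_le (Finset.card_le_univ _))]

theorem paddingCoupling_mem_couplings [Nonempty α] (ι : α ↪ β) :
    paddingCoupling ι ∈ couplings α β := by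
  have hα : (0 : ℝ) < Fintype.card α := by exact_mod_cast Fintype.card_pos
  have hβ : (0 : ℝ) < Fintype.card β := by
    exact_mod_cast Fintype.card_pos.trans_le (Fintype.card_le_of_embedding ι)
  refine ⟨fun a b => by unfold paddingCoupling; positivity, fun a => ?_, fun b => ?_⟩
  · simp only [paddingCoupling]
    rw [Finset.sum_add_distrib, sum_ite_mem_map, Fintype.sum_ite_eq', Finset.card_univ]
    field_simp
    ring
  · by_cases hb : b ∈ Finset.univ.map ι
    · obtain ⟨a, -, rfl⟩ := Finset.mem_map.1 hb
      rw [Finset.sum_eq_single a (fun a' _ ha' => by simp [paddingCoupling, Ne.symm ha'])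
        (by simp)]
      simp [paddingCoupling]
    · have hne : ∀ a, b ≠ ι a := fun a h => hb (h ▸ Finset.mem_map_of_mem ι (Finset.mem_univ a))
      simp [paddingCoupling, hb, hne]
      field_simp

theorem sum_sum_paddingCoupling_mul_sub_sq (ι : α ↪ β) (x : α → ℝ) {y : β → ℝ}
    (hy : ∀ a, y (ι a) = x a) (hy₀ : ∀ b, b ∉ Set.range ι → y b = 0) :
    ∑ a, ∑ b, paddingCoupling ι a b * (x a - y b) ^ 2 =
      ((Fintype.card β : ℝ) - Fintype.card α) / (Fintype.card α * Fintype.card β) *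
        ∑ a, x a ^ 2 := by
  rw [Finset.mul_sum]
  refine Finset.sum_congr rfl fun a _ => ?_
  have hterm : ∀ b, paddingCoupling ι a b * (x a - y b) ^ 2 =
      if b ∈ Finset.univ.map ι then 0 else x a ^ 2 / (Fintype.card α * Fintype.card β) := by
    intro b
    by_cases hb : b ∈ Set.range ι
    · obtain ⟨a', rfl⟩ := hb
      by_cases ha : a' = a
      · simp [ha, hy]
      · simp [paddingCoupling, ha, hy]
    · rw [hy₀ b hb]
      simp only [Set.mem_range, not_exists] at hb
      simp [paddingCoupling, hb, Ne.symm (hb a)]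
      ring
  rw [Finset.sum_congr rfl fun b _ => hterm b, sum_ite_mem_map, Finset.card_univ]
  ring

end Padding

theorem stmt_14 (V U : ℕ) (hV : 0 < V) (hVU : V ≤ U)
    (lam₁ : Fin V → ℝ) (lam₂ : Fin U → ℝ) (lamt : Fin U → ℝ)
    (hlamt : ∀ n : Fin U, lamt n = if h : (n : ℕ) < V then lam₁ ⟨n, h⟩ else 0)
    (σ : Equiv.Perm (Fin U)) (P : Matrix (Fin U) (Fin U) ℝ)
    (hP : ∀ v u, P v u = if σ u = v then 1 else 0) :
    dW (fun v u => (lam₁ v - lam₂ u)^2)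
      ≤ Real.sqrt (((U : ℝ) - V) / (V * U)) * enorm' lam₁
        + (1 / Real.sqrt U) * enorm' (lamt - P.mulVec lam₂) := by
  have : Nonempty (Fin V) := ⟨⟨0, hV⟩⟩
  set ι := Fin.castLEEmb hVU
  set T : Fin V → Fin U → ℝ := fun a b => paddingCoupling ι a (σ b)
  have hT : T ∈ couplings (Fin V) (Fin U) :=
    comp_equiv_mem_couplings (paddingCoupling_mem_couplings ι) σ
  have hpad : ∑ a, ∑ b, T a b * (lam₁ a - lamt (σ b)) ^ 2 =
      ((U : ℝ) - V) / (V * U) * ∑ a, lam₁ a ^ 2 := by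
    have hy₀ (n) (hn : n ∉ Set.range ι) : lamt n = 0 := by
      rw [hlamt, dif_neg fun h => hn ⟨⟨n, h⟩, rfl⟩]
    simp only [T]
    rw [Finset.sum_congr rfl fun a _ =>
        Equiv.sum_comp σ fun n => paddingCoupling ι a n * (lam₁ a - lamt n) ^ 2,
      sum_sum_paddingCoupling_mul_sub_sq ι lam₁ (fun a => by simp [ι, hlamt]) hy₀,
      Fintype.card_fin, Fintype.card_fin]
  have hperm : ∑ a, ∑ b, T a b * (lamt (σ b) - lam₂ b) ^ 2 =
      1 / U * ∑ n, (lamt - P.mulVec lam₂) n ^ 2 := by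
    rw [sum_sum_mul_of_mem_couplings hT, Fintype.card_fin, mulVec_eq_comp_symm_of_perm σ hP,
      ← Equiv.sum_comp σ fun n => (lamt - lam₂ ∘ σ.symm) n ^ 2]
    simp
  have hsplit : ∀ a b, (lam₁ a - lam₂ b) ^ 2 = (lam₁ a - lamt (σ b) + (lamt (σ b) - lam₂ b)) ^ 2 :=
    fun _ _ => by ring
  calc dW (fun v u => (lam₁ v - lam₂ u) ^ 2)
      ≤ √(∑ a, ∑ b, T a b * (lam₁ a - lam₂ b) ^ 2) := dW_le_of_mem_couplings hT
    _ ≤ √(∑ a, ∑ b, T a b * (lam₁ a - lamt (σ b)) ^ 2) +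
          √(∑ a, ∑ b, T a b * (lamt (σ b) - lam₂ b) ^ 2) := by
      simp only [hsplit, ← Fintype.sum_prod_type']
      exact sqrt_sum_mul_add_sq_le (fun p : Fin V × Fin U => hT.1 p.1 p.2) _ _
    _ = _ := by
      rw [hpad, hperm, Real.sqrt_mul (div_nonneg (by simpa using hVU) (by positivity)),
        Real.sqrt_mul (by positivity), one_div, Real.sqrt_inv, one_div]
      rfl
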